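/- There exists a CSM (communicating state machine system) whose language is 1-synchronisable but neither existentially B-bounded for any B nor half-duplex: namely, the two-process system in which P loops sending m to Q and Q loops sending m to P, with both initial states final and no receive transitions. Concretely: the language L of all complete-or-infinite traces of this system consists of shuffles of (snd(P,Q,m))^a and (snd(Q,P,m))^b (a,b ∈ ℕ ∪ {ω}); every word of L is 1-synchronisable, but for every B there is a word in L that is not existentially B-bounded, and L is not half-duplex. -/
import Mathlib


/-- Events: `snd P Q m` is process `P` sending message `m` to `Q`;
    `rcv P Q m` is process `Q` receiving message `m` from `P`. -/
inductive Ev where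
  | snd : ℕ → ℕ → ℕ → Ev
  | rcv : ℕ → ℕ → ℕ → Ev
deriving DecidableEq

/-- Message values of send events on channel (P,Q) in w. -/
def sends (w : List Ev) (P Q : ℕ) : List ℕ :=
  w.filterMap fun e => match e with
    | .snd p q m => if p = P ∧ q = Q then some m else none
    | _ => none

/-- Message values of receive events on channel (P,Q) in w. -/
def recvs (w : List Ev) (P Q : ℕ) : List ℕ :=
  w.filterMap fun e => match e with
    | .rcv p q m => if p = P ∧ q = Q then some m else none
    | _ => none

def channelCompliant (w : List Ev) : Prop :=
  ∀ u, u <+: w → ∀ P Q, recvs u P Q <+: sends u P Q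

def complete (w : List Ev) : Prop :=
  ∀ P Q, sends w P Q = recvs w P Q

def bounded (B : ℕ) (w : List Ev) : Prop :=
  ∀ u, u <+: w → ∀ P Q, (sends u P Q).length ≤ (recvs u P Q).length + B

def halfDuplex (w : List Ev) : Prop :=
  ∀ u, u <+: w → ∀ P Q,
    sends u P Q = recvs u P Q ∨ sends u Q P = recvs u Q P

/-- Send at position i on channel (P,Q) is matched by receive at position j. -/
def Matches (w : List Ev) (P Q i j : ℕ) : Prop :=
  i < j ∧ j < w.length ∧
  (∃ m, w[i]? = some (.snd P Q m) ∧ w[j]? = some (.rcv P Q m)) ∧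
  sends (w.take (i+1)) P Q = recvs (w.take (j+1)) P Q

def IsSendAt (w : List Ev) (P Q i : ℕ) : Prop := ∃ m, w[i]? = some (Ev.snd P Q m)
def IsRcvAt (w : List Ev) (P Q i : ℕ) : Prop := ∃ m, w[i]? = some (Ev.rcv P Q m)
def MatchedAt (w : List Ev) (P Q i : ℕ) : Prop := ∃ j, Matches w P Q i j

/-- The process performing the event. -/
def actor : Ev → ℕ
  | .snd p _ _ => p
  | .rcv _ q _ => q

/-- Projection of a word onto the events of process X. -/
def proj (w : List Ev) (X : ℕ) : List Ev := w.filter (fun e => actor e == X)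

/-- Two words induce the same MSC (same per-process orders; with FIFO matching,
    this determines the matching). -/
def sameMSC (w v : List Ev) : Prop := ∀ X, proj w X = proj v X

/-- Existentially B-bounded: some linearisation of msc(w) is B-bounded. -/
def existBounded (B : ℕ) (w : List Ev) : Prop :=
  ∃ v, channelCompliant v ∧ sameMSC w v ∧ bounded B v

def isSnd : Ev → Prop
  | .snd _ _ _ => True
  | _ => False

def isRcv : Ev → Prop
  | .rcv _ _ _ => True
  | _ => False

/-- Positions i and j lie in the same block of the block decomposition. -/
def SameBlock (blocks : List (List Ev)) (i j : ℕ) : Prop :=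
  ∃ t, ((blocks.take t).flatten).length ≤ i ∧ j < ((blocks.take (t+1)).flatten).length

/-- w is k-synchronisable: some linearisation of msc(w) splits into blocks of
    at most k sends followed by at most k receives, with matched pairs co-located. -/
def kSynchronisable (k : ℕ) (w : List Ev) : Prop :=
  ∃ blocks : List (List Ev),
    channelCompliant blocks.flatten ∧ sameMSC w blocks.flatten ∧
    (∀ b ∈ blocks, ∃ s r, b = s ++ r ∧ s.length ≤ k ∧ r.length ≤ k ∧
      (∀ e ∈ s, isSnd e) ∧ (∀ e ∈ r, isRcv e)) ∧
    (∀ P Q i j, Matches blocks.flatten P Q i j → SameBlock blocks i j)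

/-- One step of the indistinguishability relation ∼. -/
inductive Sim1 : List Ev → List Ev → Prop
  | ss (u v : List Ev) (P Q R S m m' : ℕ) (h : P ≠ R) :
      Sim1 (u ++ Ev.snd P Q m :: Ev.snd R S m' :: v)
           (u ++ Ev.snd R S m' :: Ev.snd P Q m :: v)
  | rr (u v : List Ev) (P Q R S m m' : ℕ) (h : Q ≠ S) :
      Sim1 (u ++ Ev.rcv P Q m :: Ev.rcv R S m' :: v)
           (u ++ Ev.rcv R S m' :: Ev.rcv P Q m :: v)
  | sr (u v : List Ev) (P Q R S m m' : ℕ) (h1 : P ≠ S) (h2 : P ≠ R ∨ Q ≠ S) :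
      Sim1 (u ++ Ev.snd P Q m :: Ev.rcv R S m' :: v)
           (u ++ Ev.rcv R S m' :: Ev.snd P Q m :: v)
  | srSame (u v : List Ev) (P Q m m' : ℕ)
      (h : (recvs u P Q).length < (sends u P Q).length) :
      Sim1 (u ++ Ev.snd P Q m :: Ev.rcv P Q m' :: v)
           (u ++ Ev.rcv P Q m' :: Ev.snd P Q m :: v)

/-- The indistinguishability relation ∼ (finitely many swaps). -/
def Sim : List Ev → List Ev → Prop := Relation.ReflTransGen Sim1

lemma recvs_nil_of_sends {P Q m : ℕ} (u : List Ev)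
    (hu : ∀ e ∈ u, e = Ev.snd P Q m ∨ e = Ev.snd Q P m) (A B : ℕ) :
    recvs u A B = [] := by
  rw [recvs, List.filterMap_eq_nil_iff]
  intro e he
  rcases hu e he with h | h <;> simp [h]

lemma flatten_map_sing (w : List Ev) : (w.map fun e => [e]).flatten = w := by
  induction w with
  | nil => simp
  | cons a t ih => simp [ih]

/-- the language of all interleavings of sends snd(P,Q,m) and
    snd(Q,P,m) (generated by the two looping send-only machines) is
    1-synchronisable but neither existentially B-bounded for any B nor
    half-duplex. -/
theorem two_senders_example (P Q m : ℕ) (hPQ : P ≠ Q) :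
    let L : Set (List Ev) := {w | ∀ e ∈ w, e = Ev.snd P Q m ∨ e = Ev.snd Q P m}
    (∀ w ∈ L, kSynchronisable 1 w) ∧
    (∀ B, ∃ w ∈ L, ¬ existBounded B w) ∧
    ¬ (∀ w ∈ L, halfDuplex w) := by
  intro L
  refine ⟨?_, ?_, ?_⟩
  · intro w hw
    refine ⟨w.map fun e => [e], ?_, ?_, ?_, ?_⟩
    · rw [flatten_map_sing]
      intro u hu A B
      rw [recvs_nil_of_sends u (fun e he => hw e (hu.subset he))]
      exact List.nil_prefix
    · rw [flatten_map_sing]; intro X; rfl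
    · intro b hb
      rcases List.mem_map.1 hb with ⟨e, he, rfl⟩
      refine ⟨[e], [], by simp, by simp, by simp, ?_, by simp⟩
      intro e' he'
      rw [List.mem_singleton] at he'
      subst he'
      rcases hw _ he with h | h <;> simp [h, isSnd]
    · intro A B i j hM
      rw [flatten_map_sing] at hM
      exfalso
      rcases hM.2.2.1 with ⟨m', _, hj⟩
      have := List.mem_of_getElem? hj
      rcases hw _ this with h | h <;> simp_all
  · intro B
    refine ⟨List.replicate (B+1) (Ev.snd P Q m), ?_, ?_⟩
    · intro e he
      left; exact List.eq_of_mem_replicate he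
    · rintro ⟨v, hcc, hmsc, hbd⟩
      have hall : ∀ e ∈ v, actor e = P := by
        intro e he
        by_contra hne
        have : e ∈ proj v (actor e) := by
          simp [proj, he]
        rw [← hmsc (actor e)] at this
        have : e ∈ List.replicate (B+1) (Ev.snd P Q m) := by
          have := List.mem_filter.1 this
          exact this.1
        have := List.eq_of_mem_replicate this
        subst this
        exact hne rfl
      have hv : v = List.replicate (B+1) (Ev.snd P Q m) := by
        have h1 : proj v P = v := by
          rw [proj, List.filter_eq_self]
          intro e he
          simp [hall e he]
        have h2 : proj (List.replicate (B+1) (Ev.snd P Q m)) P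
            = List.replicate (B+1) (Ev.snd P Q m) := by
          rw [proj, List.filter_eq_self]
          intro e he
          have := List.eq_of_mem_replicate he
          simp [this, actor]
        rw [← h1, ← hmsc P, h2]
      have := hbd v List.prefix_rfl P Q
      rw [hv] at this
      have hs : sends (List.replicate (B+1) (Ev.snd P Q m)) P Q
          = List.replicate (B+1) m := by
        simp [sends, List.filterMap_replicate]
      have hr : recvs (List.replicate (B+1) (Ev.snd P Q m)) P Q = [] := by
        simp [recvs, List.filterMap_replicate]
      rw [hs, hr] at this
      simp at this
  · intro hhd
    have hw : [Ev.snd P Q m, Ev.snd Q P m] ∈ L := by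
      intro e he
      simp at he
      tauto
    have := hhd _ hw _ List.prefix_rfl P Q
    have hs : sends [Ev.snd P Q m, Ev.snd Q P m] P Q = [m] := by
      simp [sends, hPQ, hPQ.symm]
    have hs' : sends [Ev.snd P Q m, Ev.snd Q P m] Q P = [m] := by
      simp [sends, hPQ, hPQ.symm]
    have hr : ∀ A B, recvs [Ev.snd P Q m, Ev.snd Q P m] A B = [] := by
      intro A B; simp [recvs]
    rw [hs, hs', hr, hr] at this
    simp at this
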